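/- arXiv:2101.12666 — 2 statements merged into one kernel-verified Lean document; each statement's English description precedes it below -/
import Mathlib

section
/- Let U ∈ ℂ^{S×L} with S ≥ 2, let E ∈ ℂ^{L×L} be invertible, and suppose U·E = K where K is an S×L Vandermonde matrix with distinct generators ω₁,…,ω_L. Let U₁ and U₂ be the submatrices of U obtained by deleting the last and first row, respectively. If U₁ has full column rank L, then the matrix U₁⁺U₂ (with U₁⁺ the Moore–Penrose pseudoinverse) equals E·diag(ω)·E⁻¹; in particular its eigenvalues are exactly ω₁,…,ω_L. -/
open Matrix

/-- Moore–Penrose pseudoinverse of a full-column-rank matrix. -/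
noncomputable def pinv {m n : ℕ} (A : Matrix (Fin m) (Fin n) ℂ) : Matrix (Fin n) (Fin m) ℂ :=
  (Aᴴ * A)⁻¹ * Aᴴ

open ComplexOrder in
lemma isUnit_gram {m n : ℕ} (A : Matrix (Fin m) (Fin n) ℂ) (h : A.rank = n) :
    IsUnit (Aᴴ * A) := by
  rw [← Matrix.mulVec_surjective_iff_isUnit]
  have hr : (Aᴴ * A).rank = n := by rw [Matrix.rank_conjTranspose_mul_self, h]
  have htop : LinearMap.range (Aᴴ * A).mulVecLin = ⊤ := by
    apply Submodule.eq_top_of_finrank_eq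
    rw [← Matrix.rank, hr, Module.finrank_pi]
    simp
  intro v
  have : v ∈ LinearMap.range (Aᴴ * A).mulVecLin := htop ▸ Submodule.mem_top
  obtain ⟨w, hw⟩ := this
  exact ⟨w, hw⟩

/-- Shift-invariance via the Vandermonde factor: U₁⁺U₂ = E·diag(ω)·E⁻¹,
whose eigenvalues are exactly the generators ω. -/
theorem stmt5 {S L : ℕ} (hS : 1 ≤ S) (U : Matrix (Fin (S + 1)) (Fin L) ℂ)
    (E : Matrix (Fin L) (Fin L) ℂ) (hE : IsUnit E)
    (ω : Fin L → ℂ) (hω : Function.Injective ω)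
    (hUE : U * E = Matrix.of fun (s : Fin (S + 1)) (l : Fin L) => ω l ^ (s : ℕ))
    (h1 : (U.submatrix Fin.castSucc id).rank = L) :
    pinv (U.submatrix Fin.castSucc id) * U.submatrix Fin.succ id
        = E * Matrix.diagonal ω * E⁻¹ ∧
    spectrum ℂ (pinv (U.submatrix Fin.castSucc id) * U.submatrix Fin.succ id)
        = Set.range ω := by
  set U₁ := U.submatrix Fin.castSucc id with hU₁
  set U₂ := U.submatrix Fin.succ id with hU₂
  set K := Matrix.of fun (s : Fin (S + 1)) (l : Fin L) => ω l ^ (s : ℕ) with hK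
  have hEdet : IsUnit E.det := (Matrix.isUnit_iff_isUnit_det E).mp hE
  have hsub1 : U₁ * E = K.submatrix Fin.castSucc id := by
    simpa [hUE] using (Matrix.submatrix_mul U E Fin.castSucc id id Function.bijective_id).symm
  have hsub2 : U₂ * E = K.submatrix Fin.succ id := by
    simpa [hUE] using (Matrix.submatrix_mul U E Fin.succ id id Function.bijective_id).symm
  have hshift : K.submatrix Fin.succ id = K.submatrix Fin.castSucc id * Matrix.diagonal ω := by
    ext s l
    simp only [Matrix.mul_diagonal, Matrix.submatrix_apply, id_eq, hK, Matrix.of_apply]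
    rw [Fin.val_succ, Fin.coe_castSucc, pow_succ]
  have h2 : U₂ = U₁ * (E * Matrix.diagonal ω * E⁻¹) := by
    have : U₂ * E = U₁ * (E * Matrix.diagonal ω) := by
      rw [hsub2, hshift, ← hsub1, Matrix.mul_assoc]
    calc U₂ = U₂ * E * E⁻¹ := by rw [Matrix.mul_nonsing_inv_cancel_right _ _ hEdet]
      _ = U₁ * (E * Matrix.diagonal ω) * E⁻¹ := by rw [this]
      _ = U₁ * (E * Matrix.diagonal ω * E⁻¹) := by rw [Matrix.mul_assoc]
  have hgram : IsUnit (U₁ᴴ * U₁) := isUnit_gram U₁ h1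
  have hmain : pinv U₁ * U₂ = E * Matrix.diagonal ω * E⁻¹ := by
    rw [h2, pinv, Matrix.mul_assoc, ← Matrix.mul_assoc U₁ᴴ U₁ _, ← Matrix.mul_assoc,
      Matrix.nonsing_inv_mul _ ((Matrix.isUnit_iff_isUnit_det _).mp hgram), Matrix.one_mul]
  refine ⟨hmain, ?_⟩
  rw [hmain]
  have hcoe : (↑hE.unit⁻¹ : Matrix (Fin L) (Fin L) ℂ) = E⁻¹ := by
    rw [Matrix.coe_units_inv, hE.unit_spec]
  calc spectrum ℂ (E * Matrix.diagonal ω * E⁻¹)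
      = spectrum ℂ ((hE.unit : Matrix (Fin L) (Fin L) ℂ) * Matrix.diagonal ω * ↑hE.unit⁻¹) := by
        rw [hcoe, hE.unit_spec]
    _ = spectrum ℂ (Matrix.diagonal ω) := spectrum.units_conjugate
    _ = Set.range ω := spectrum_diagonal ω
end

section
/- Let K ∈ ℂ^{S×L} be Vandermonde with distinct generators and X ∈ ℂ^{K₀×L} arbitrary with no zero column. If the Khatri–Rao product K ⊙ X equals K ⊙ X' · Π · Δ for a permutation matrix Π and invertible diagonal matrix Δ with X' ∈ ℂ^{K₀×L} and the same Vandermonde matrix K, and S ≥ 2, then Π = I; i.e., the distinct generators of the Vandermonde factor prevent column permutation ambiguity that mixes distinct generators. -/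
open Matrix

/-- Column-wise Khatri–Rao product. -/
def kr {α β : Type*} {n : ℕ} (X : Matrix α (Fin n) ℂ) (Y : Matrix β (Fin n) ℂ) :
    Matrix (α × β) (Fin n) ℂ := fun i j => X i.1 j * Y i.2 j

/-- Distinct Vandermonde generators prevent permutation ambiguity in the
Khatri–Rao factorization K ⊙ X = (K ⊙ X')·Π·Δ. -/
theorem stmt13 {S L K0 : ℕ} (hS : 2 ≤ S) (z : Fin L → ℂ) (hz : Function.Injective z)
    (Kv : Matrix (Fin S) (Fin L) ℂ) (hK : ∀ s l, Kv s l = z l ^ (s : ℕ))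
    (X X' : Matrix (Fin K0) (Fin L) ℂ) (hX : ∀ l, (fun k => X k l) ≠ 0)
    (σ : Equiv.Perm (Fin L)) (d : Fin L → ℂ) (hd : ∀ l, d l ≠ 0)
    (hfac : kr Kv X =
      kr Kv X' * (Matrix.of fun i j => if σ i = j then (1 : ℂ) else 0) * Matrix.diagonal d) :
    (Matrix.of fun i j => if σ i = j then (1 : ℂ) else 0)
      = (1 : Matrix (Fin L) (Fin L) ℂ) := by
  have hσ : ∀ l, σ.symm l = l := by
    intro l
    obtain ⟨k, hk⟩ : ∃ k, X k l ≠ 0 := by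
      by_contra h
      push_neg at h
      exact hX l (funext h)
    have h0 := congrFun (congrFun hfac (⟨0, by omega⟩, k)) l
    have h1 := congrFun (congrFun hfac (⟨1, by omega⟩, k)) l
    simp only [kr, Matrix.mul_apply, Matrix.diagonal_apply, Matrix.of_apply, hK,
      ite_mul, mul_ite, one_mul, zero_mul, mul_zero, Finset.sum_ite_eq,
      Finset.mem_univ, if_true] at h0 h1
    -- simplify the inner sums over the permutation delta
    rw [Finset.sum_ite_eq' Finset.univ l] at h0 h1
    simp only [Finset.mem_univ, if_true] at h0 h1
    have hsum : ∀ (f : Fin L → ℂ), (∑ j, if σ j = l then f j else 0) = f (σ.symm l) := by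
      intro f
      rw [Finset.sum_eq_single (σ.symm l)]
      · simp
      · intro b _ hb
        rw [if_neg]
        intro hc
        exact hb (by simpa using congrArg σ.symm hc)
      · simp
    rw [hsum] at h0 h1
    simp only [pow_zero, pow_one, one_mul, mul_one] at h0 h1
    have key : z l * X k l = z (σ.symm l) * X k l := by
      rw [h1, h0]; ring
    have := mul_right_cancel₀ hk key
    exact (hz this.symm)
  have hσ' : ∀ l, σ l = l := fun l => by
    conv_lhs => rw [← hσ l]
    simp
  ext i j
  simp [Matrix.one_apply, hσ']
end
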